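/- arXiv:2209.08880 — 2 statements merged into one kernel-verified Lean document; each statement's English description precedes it below -/
import Mathlib

section
/- Let a, b, c, d be real numbers with ad − bc = 1 and b > 0, and let f ∈ L¹(ℝ) ∩ L²(ℝ) be such that its linear canonical transform F^{(a,b,c,d)} belongs to L¹(ℝ). Then the function f_𝒜^{(a,b)}(z) := 2 ∫₀^∞ K^{(d,−b,−c,a)}(z, ω) F^{(a,b,c,d)}(ω) dω is a well-defined holomorphic function on the upper half-plane ℂ⁺ = { z ∈ ℂ : Im z > 0 }. -/
/-!
The kernel factors as `K(z, ω) = C e^{-iaz²/(2b)} · e^{i(z/b)ω} · e^{-idω²/(2b)}`. The first factor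
is entire and the last is unimodular in `ω`, so the signal is an entire function times the
one-sided Fourier–Laplace transform `w ↦ ∫₀^∞ e^{iwt} g(t) dt` of an integrable `g`, evaluated at
`w = z/b`, which stays in the upper half-plane because `b > 0`. That transform is holomorphic on
`Im w > 0` by differentiation under the integral sign: near `w₀` the derivative `i t e^{iwt} g(t)`
is dominated by `(2 / Im w₀) |g(t)|`, since `t e^{-εt} ≤ 1/ε`.
-/

open MeasureTheory Complex Filter Topology

/-- The LCT kernel `K^{(a,b,c,d)}(ω, x)` on the real line. -/
noncomputable def lctKernel (a b c d : ℝ) (ω x : ℝ) : ℂ :=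
  ((2 * Real.pi * Complex.I * b) ^ ((2 : ℂ)⁻¹))⁻¹ *
    Complex.exp (Complex.I *
      ((d * ω ^ 2 / (2 * b) - ω * x / b + a * x ^ 2 / (2 * b) : ℝ) : ℂ))

/-- The linear canonical transform of `f` with parameters `(a,b,c,d)`. -/
noncomputable def lct (a b c d : ℝ) (f : ℝ → ℂ) (ω : ℝ) : ℂ :=
  ∫ x : ℝ, lctKernel a b c d ω x * f x

/-- The kernel `K^{(d,−b,−c,a)}(z, ω)` with complex first argument. -/
noncomputable def lctKernelInv (a b c d : ℝ) (z : ℂ) (ω : ℝ) : ℂ :=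
  ((-2 * Real.pi * Complex.I * b) ^ ((2 : ℂ)⁻¹))⁻¹ *
    Complex.exp (Complex.I *
      (-(a : ℂ) * z ^ 2 / (2 * (b : ℂ)) + z * (ω : ℂ) / (b : ℂ) -
        (d : ℂ) * (ω : ℂ) ^ 2 / (2 * (b : ℂ))))

lemma Real.mul_exp_neg_mul_le_inv {ε : ℝ} (hε : 0 < ε) (t : ℝ) :
    t * Real.exp (-(ε * t)) ≤ ε⁻¹ := by
  have hexp : (ε * t) * Real.exp (-(ε * t)) ≤ 1 := by
    calc (ε * t) * Real.exp (-(ε * t)) ≤ Real.exp (ε * t) * Real.exp (-(ε * t)) := by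
          gcongr; linarith [Real.add_one_le_exp (ε * t)]
      _ = 1 := by rw [← Real.exp_add, add_neg_cancel, Real.exp_zero]
  calc t * Real.exp (-(ε * t)) = ε⁻¹ * ((ε * t) * Real.exp (-(ε * t))) := by
        field_simp
    _ ≤ ε⁻¹ := mul_le_of_le_one_right (inv_nonneg.mpr hε.le) hexp

lemma norm_cexp_I_mul_mul_ofReal (w : ℂ) (t : ℝ) :
    ‖cexp (I * w * t)‖ = Real.exp (-(w.im * t)) := by
  simp [Complex.norm_exp]

section FourierLaplace

variable {g : ℝ → ℂ}

lemma integrableOn_Ioi_cexp_I_mul_mul (hg : IntegrableOn g (Set.Ioi 0)) {w : ℂ}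
    (hw : 0 ≤ w.im) : IntegrableOn (fun t : ℝ => cexp (I * w * t) * g t) (Set.Ioi 0) := by
  refine Integrable.bdd_mul (c := 1) hg (by fun_prop) ?_
  filter_upwards [ae_restrict_mem measurableSet_Ioi] with t (ht : 0 < t)
  rw [norm_cexp_I_mul_mul_ofReal, Real.exp_le_one_iff, neg_nonpos]
  exact mul_nonneg hw ht.le

lemma differentiableOn_integral_Ioi_cexp_I_mul_mul (hg : IntegrableOn g (Set.Ioi 0)) :
    DifferentiableOn ℂ (fun w : ℂ => ∫ t : ℝ in Set.Ioi 0, cexp (I * w * t) * g t)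
      {w | 0 < w.im} := by
  intro w₀ (hw₀ : 0 < w₀.im)
  have hε : 0 < w₀.im / 2 := half_pos hw₀
  have hmeas : ∀ w : ℂ, AEStronglyMeasurable (fun t : ℝ => cexp (I * w * t) * g t)
      (volume.restrict (Set.Ioi 0)) := fun w =>
    (by fun_prop : Continuous fun t : ℝ => cexp (I * w * t)).aestronglyMeasurable.restrict.mul
      hg.aestronglyMeasurable
  have hderiv : ∀ (t : ℝ) (w : ℂ), HasDerivAt (fun w : ℂ => cexp (I * w * t) * g t)
      (I * t * cexp (I * w * t) * g t) w := fun t w => by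
    have := (((hasDerivAt_id w).const_mul I).mul_const (t : ℂ)).cexp.mul_const (g t)
    exact this.congr_deriv (by simp only [id, mul_one]; ring)
  have hbound : ∀ t ∈ Set.Ioi (0 : ℝ), ∀ w ∈ Metric.ball w₀ (w₀.im / 2),
      ‖I * t * cexp (I * w * t) * g t‖ ≤ (w₀.im / 2)⁻¹ * ‖g t‖ := by
    intro t (ht : 0 < t) w hw
    have him : w₀.im / 2 ≤ w.im := by
      have := (abs_im_le_norm (w - w₀)).trans_lt (mem_ball_iff_norm.mp hw)
      rw [sub_im] at this
      linarith [(abs_lt.mp this).1]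
    rw [norm_mul, norm_mul, norm_mul, norm_I, one_mul, norm_real, Real.norm_of_nonneg ht.le,
      norm_cexp_I_mul_mul_ofReal]
    gcongr
    calc t * Real.exp (-(w.im * t)) ≤ t * Real.exp (-(w₀.im / 2 * t)) := by gcongr
      _ ≤ (w₀.im / 2)⁻¹ := Real.mul_exp_neg_mul_le_inv hε t
  have hderiv_meas : AEStronglyMeasurable (fun t : ℝ => I * t * cexp (I * w₀ * t) * g t)
      (volume.restrict (Set.Ioi 0)) :=
    (by fun_prop : Continuous fun t : ℝ => I * t * cexp (I * w₀ * t)).aestronglyMeasurable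
      |>.restrict.mul hg.aestronglyMeasurable
  have key := hasDerivAt_integral_of_dominated_loc_of_deriv_le
    (Metric.ball_mem_nhds w₀ hε) (Eventually.of_forall hmeas)
    (integrableOn_Ioi_cexp_I_mul_mul hg hw₀.le) hderiv_meas
    ((ae_restrict_mem measurableSet_Ioi).mono hbound)
    ((Integrable.norm hg).const_mul (w₀.im / 2)⁻¹)
    (Eventually.of_forall fun t w _ => hderiv t w)
  exact key.2.differentiableAt.differentiableWithinAt

end FourierLaplace

lemma lctKernelInv_eq_mul (a b c d : ℝ) (z : ℂ) (ω : ℝ) :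
    lctKernelInv a b c d z ω =
      ((-2 * Real.pi * I * b) ^ ((2 : ℂ)⁻¹))⁻¹ * cexp (-(I * a * z ^ 2 / (2 * b))) *
        (cexp (I * (z / b) * ω) * cexp (((-(d * ω ^ 2 / (2 * b)) : ℝ) : ℂ) * I)) := by
  simp only [lctKernelInv, mul_assoc, ← Complex.exp_add]
  congr 2
  push_cast
  ring

theorem generalized_analytic_signal_holomorphic_general
    (a b c d : ℝ) (hb : 0 < b)
    (f : ℝ → ℂ)
    (hF : Integrable (lct a b c d f)) :
    (∀ z : ℂ, 0 < z.im →
        IntegrableOn (fun ω : ℝ => lctKernelInv a b c d z ω * lct a b c d f ω)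
          (Set.Ioi 0)) ∧
      DifferentiableOn ℂ
        (fun z : ℂ =>
          2 * ∫ ω in Set.Ioi (0 : ℝ), lctKernelInv a b c d z ω * lct a b c d f ω)
        {z : ℂ | 0 < z.im} := by
  set chirp : ℂ → ℂ := fun z =>
    ((-2 * Real.pi * I * b) ^ ((2 : ℂ)⁻¹))⁻¹ * cexp (-(I * a * z ^ 2 / (2 * b)))
  set G : ℝ → ℂ := fun ω => cexp (((-(d * ω ^ 2 / (2 * b)) : ℝ) : ℂ) * I) * lct a b c d f ω
  have hG : IntegrableOn G (Set.Ioi 0) :=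
    (hF.bdd_mul (by fun_prop) (.of_forall fun ω => (norm_exp_ofReal_mul_I _).le)).integrableOn
  have hfactor : ∀ z ω, lctKernelInv a b c d z ω * lct a b c d f ω =
      chirp z * (cexp (I * (z / b) * ω) * G ω) := by
    intro z ω
    rw [lctKernelInv_eq_mul]
    ring
  have hmaps : Set.MapsTo (fun z : ℂ => z / b) {z | 0 < z.im} {w | 0 < w.im} := fun z hz => by
    simpa [div_ofReal_im] using div_pos hz hb
  simp only [hfactor, integral_const_mul]
  refine ⟨fun z hz => (integrableOn_Ioi_cexp_I_mul_mul hG (hmaps hz).le).const_mul _, ?_⟩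
  have hchirp : Differentiable ℂ chirp := by fun_prop
  exact (hchirp.differentiableOn.mul
    ((differentiableOn_integral_Ioi_cexp_I_mul_mul hG).comp (by fun_prop) hmaps)).const_mul 2

/-- the generalized analytic signal
`f_𝒜^{(a,b)}(z) = 2 ∫₀^∞ K^{(d,−b,−c,a)}(z, ω) F^{(a,b,c,d)}(ω) dω`
is well defined and holomorphic on the upper half-plane. -/
theorem generalized_analytic_signal_holomorphic
    (a b c d : ℝ) (hb : 0 < b) (habcd : a * d - b * c = 1)
    (f : ℝ → ℂ) (hf1 : Integrable f) (hf2 : MemLp f 2)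
    (hF : Integrable (lct a b c d f)) :
    (∀ z : ℂ, 0 < z.im →
        IntegrableOn (fun ω : ℝ => lctKernelInv a b c d z ω * lct a b c d f ω)
          (Set.Ioi 0)) ∧
      DifferentiableOn ℂ
        (fun z : ℂ =>
          2 * ∫ ω in Set.Ioi (0 : ℝ), lctKernelInv a b c d z ω * lct a b c d f ω)
        {z : ℂ | 0 < z.im} :=
  generalized_analytic_signal_holomorphic_general a b c d hb f hF
end

section
/- Let a, b, c, d be real numbers with ad − bc = 1 and b > 0, let f ∈ L¹(ℝ) ∩ L²(ℝ) with F^{(a,b,c,d)} ∈ L¹(ℝ), and set g(t) = e^{i a t²/(2b)} f(t). Then for every x ∈ ℝ and y > 0, f_𝒜^{(a,b)}(x + iy) = e^{−i a (x+iy)²/(2b)} [ ∫_ℝ P_y(x − t) g(t) dt + i ∫_ℝ Q_y(x − t) g(t) dt ], where f_𝒜^{(a,b)}(z) := 2 ∫₀^∞ K^{(d,−b,−c,a)}(z, ω) F^{(a,b,c,d)}(ω) dω. -/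
open MeasureTheory Complex Filter Topology

/-!
Multiplying the two LCT kernels cancels the chirp `d ω² / (2b)`: the product is
`(2πb)⁻¹ e^{-i a z²/(2b)} e^{i (z - t) ω / b} e^{i a t²/(2b)}`, the two square-root
prefactors combining to `2πb` because `-2πib` is the conjugate of `2πib`. For `Im z > 0` the
double integral converges absolutely, so Fubini reduces the `ω`-integral to the Laplace integral
`∫₀^∞ e^{i (z - t) ω / b} dω = i b / (z - t)`. What remains is the Cauchy kernel
`i / (π (z - t))`, whose real and imaginary parts are `P_y(x - t)` and `Q_y(x - t)`.
-/

open ComplexConjugate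

theorem cpow_inv_two_mul_conj_cpow_inv_two {z : ℂ} (hz : z.arg ≠ Real.pi) :
    z ^ (2⁻¹ : ℂ) * conj z ^ (2⁻¹ : ℂ) = ‖z‖ := by
  have hsq : (z ^ (2⁻¹ : ℂ)) ^ 2 = z := by exact_mod_cast cpow_nat_inv_pow z two_ne_zero
  rw [conj_cpow z _ hz, map_inv₀, map_ofNat, mul_conj', ← ofReal_pow, ← norm_pow, hsq]

theorem MeasureTheory.Integrable.cexp_I_mul_ofReal_mul {α : Type*} [MeasurableSpace α]
    {μ : Measure α} {φ : α → ℝ} {f : α → ℂ} (hf : Integrable f μ)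
    (hφ : Measurable φ) :
    Integrable (fun t => cexp (I * φ t) * f t) μ :=
  hf.bdd_mul (c := 1) (by fun_prop : Measurable _).aestronglyMeasurable
    (Eventually.of_forall fun t => (norm_exp_I_mul_ofReal (φ t)).le)

theorem integral_Ioi_integral_cexp_mul_mul {α : Type*} [MeasurableSpace α] {μ : Measure α}
    [SFinite μ] {s g : α → ℂ} {κ : ℝ} (hκ : 0 < κ) (hs_meas : Measurable s)
    (hs : ∀ t, (s t).re ≤ -κ) (hg : Integrable g μ) :
    ∫ ω in Set.Ioi (0 : ℝ), ∫ t, cexp (s t * ω) * g t ∂μ = ∫ t, -(s t)⁻¹ * g t ∂μ := by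
  have hint : Integrable (fun p : ℝ × α => cexp (s p.2 * p.1) * g p.2)
      ((volume.restrict (Set.Ioi 0)).prod μ) := by
    refine ((exp_neg_integrableOn_Ioi 0 hκ).mul_prod hg.norm).mono'
      ((by fun_prop : Measurable fun p : ℝ × α => cexp (s p.2 * p.1)).aestronglyMeasurable.mul
        hg.1.comp_snd) ?_
    filter_upwards
      [Measure.quasiMeasurePreserving_fst.ae (ae_restrict_mem measurableSet_Ioi)]
      with p (hp : 0 < p.1)
    rw [norm_mul, norm_exp]
    gcongr
    simpa [mul_re] using mul_le_mul_of_nonneg_right (hs p.2) hp.le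
  rw [integral_integral_swap hint]
  refine integral_congr_ae (Eventually.of_forall fun t => ?_)
  have hst : (s t).re < 0 := (hs t).trans_lt (neg_neg_of_pos hκ)
  simp only [integral_mul_const, integral_exp_mul_complex_Ioi hst, Complex.ofReal_zero, mul_zero,
    Complex.exp_zero, neg_div, one_div]

theorem lctKernelInv_mul_lctKernel {a b c d : ℝ} (hb : 0 < b) (z : ℂ) (ω t : ℝ) :
    lctKernelInv a b c d z ω * lctKernel a b c d ω t =
      (2 * Real.pi * b : ℂ)⁻¹ * cexp (-I * a * z ^ 2 / (2 * b)) *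
        (cexp (I * (z - t) / b * ω) * cexp (I * ((a * t ^ 2 / (2 * b) : ℝ) : ℂ))) := by
  have hnorm : (2 * Real.pi * I * b) ^ (2⁻¹ : ℂ) * (-2 * Real.pi * I * b) ^ (2⁻¹ : ℂ) =
      (2 * Real.pi * b : ℂ) := by
    have harg : (2 * Real.pi * I * b).arg = Real.pi / 2 := by
      rw [show (2 * Real.pi * I * b : ℂ) = (2 * Real.pi * b : ℝ) * I by push_cast; ring,
        arg_real_mul _ (by positivity), arg_I]
    have hconj : (-2 * Real.pi * I * b : ℂ) = conj (2 * Real.pi * I * b) := by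
      rw [map_mul, map_mul, map_mul, conj_I, conj_ofReal, conj_ofReal, map_ofNat]; ring
    rw [hconj, cpow_inv_two_mul_conj_cpow_inv_two (by rw [harg]; linarith [Real.pi_pos])]
    simp [abs_of_pos hb, abs_of_pos Real.pi_pos]
  have hb' : (b : ℂ) ≠ 0 := ofReal_ne_zero.mpr hb.ne'
  simp only [lctKernelInv, lctKernel]
  rw [mul_mul_mul_comm, ← mul_inv, mul_comm ((-2 * Real.pi * I * b) ^ _), hnorm]
  simp only [mul_assoc, ← exp_add]
  congr 2
  push_cast
  field_simp
  ring

theorem lctKernelInv_mul_lct {a b c d : ℝ} (hb : 0 < b) (f : ℝ → ℂ) (z : ℂ) (ω : ℝ) :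
    lctKernelInv a b c d z ω * lct a b c d f ω =
      (2 * Real.pi * b : ℂ)⁻¹ * cexp (-I * a * z ^ 2 / (2 * b)) *
        ∫ t : ℝ, cexp (I * (z - t) / b * ω) *
          (cexp (I * ((a * t ^ 2 / (2 * b) : ℝ) : ℂ)) * f t) := by
  rw [lct, ← integral_const_mul, ← integral_const_mul]
  congr 1 with t
  rw [← mul_assoc, lctKernelInv_mul_lctKernel hb]
  ring

theorem integral_Ioi_integral_cexp_I_mul_sub_div_mul {b : ℝ} (hb : 0 < b) {z : ℂ}
    (hz : 0 < z.im) {g : ℝ → ℂ} (hg : Integrable g) :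
    ∫ ω in Set.Ioi (0 : ℝ), ∫ t : ℝ, cexp (I * (z - t) / b * ω) * g t =
      ∫ t : ℝ, b * I / (z - t) * g t := by
  have hb' : (b : ℂ) ≠ 0 := ofReal_ne_zero.2 hb.ne'
  have hre (t : ℝ) : (I * (z - t) / b).re ≤ -(z.im / b) := by simp [div_ofReal_re, neg_div]
  rw [integral_Ioi_integral_cexp_mul_mul (div_pos hz hb) (by fun_prop) hre hg]
  congr 1 with t
  have hzt : z - t ≠ 0 := fun h => hz.ne' (by simpa using congrArg im h)
  field_simp
  rw [I_sq, neg_one_mul]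

noncomputable def halfPlanePoissonKernel (y u : ℝ) : ℝ := y / (Real.pi * (u ^ 2 + y ^ 2))

noncomputable def halfPlaneConjPoissonKernel (y u : ℝ) : ℝ := u / (Real.pi * (u ^ 2 + y ^ 2))

theorem I_div_pi_mul_eq_halfPlanePoissonKernel_add {y : ℝ} (hy : y ≠ 0) (u : ℝ) :
    I / (Real.pi * (u + y * I)) =
      halfPlanePoissonKernel y u + I * halfPlaneConjPoissonKernel y u := by
  have hw : (u : ℂ) + y * I ≠ 0 := fun h => hy (by simpa using congrArg im h)
  have hD : (u : ℂ) ^ 2 + y ^ 2 ≠ 0 := by exact_mod_cast (by positivity : u ^ 2 + y ^ 2 ≠ 0)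
  rw [div_eq_iff (mul_ne_zero (ofReal_ne_zero.2 Real.pi_ne_zero) hw)]
  simp only [halfPlanePoissonKernel, halfPlaneConjPoissonKernel]
  push_cast
  field_simp
  linear_combination -(u : ℂ) * y * I_sq

theorem abs_halfPlanePoissonKernel_le {y : ℝ} (hy : 0 < y) (u : ℝ) :
    |halfPlanePoissonKernel y u| ≤ (Real.pi * y)⁻¹ := by
  rw [halfPlanePoissonKernel, abs_of_pos (by positivity), ← one_div,
    div_le_div_iff₀ (by positivity) (by positivity)]
  nlinarith [sq_nonneg u, Real.pi_pos]

theorem abs_halfPlaneConjPoissonKernel_le {y : ℝ} (hy : 0 < y) (u : ℝ) :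
    |halfPlaneConjPoissonKernel y u| ≤ (Real.pi * y)⁻¹ := by
  rw [halfPlaneConjPoissonKernel, abs_div,
    abs_of_pos (by positivity : 0 < Real.pi * (u ^ 2 + y ^ 2)), ← one_div,
    div_le_div_iff₀ (by positivity) (by positivity)]
  nlinarith [sq_nonneg (|u| - y), sq_abs u, Real.pi_pos, abs_nonneg u]

theorem MeasureTheory.Integrable.halfPlanePoissonKernel_mul {g : ℝ → ℂ}
    (hg : Integrable g) {y : ℝ} (hy : 0 < y) (x : ℝ) :
    Integrable (fun t => (halfPlanePoissonKernel y (x - t) : ℂ) * g t) :=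
  hg.bdd_mul (by unfold halfPlanePoissonKernel; fun_prop : Measurable _).aestronglyMeasurable
    (Eventually.of_forall fun t => by simpa using abs_halfPlanePoissonKernel_le hy (x - t))

theorem MeasureTheory.Integrable.halfPlaneConjPoissonKernel_mul {g : ℝ → ℂ}
    (hg : Integrable g) {y : ℝ} (hy : 0 < y) (x : ℝ) :
    Integrable (fun t => (halfPlaneConjPoissonKernel y (x - t) : ℂ) * g t) :=
  hg.bdd_mul (by unfold halfPlaneConjPoissonKernel; fun_prop : Measurable _).aestronglyMeasurable
    (Eventually.of_forall fun t => by simpa using abs_halfPlaneConjPoissonKernel_le hy (x - t))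

theorem generalized_analytic_signal_poisson_repr_general
    (a b c d : ℝ) (hb : 0 < b)
    (f : ℝ → ℂ) (hf1 : Integrable f)
    (g : ℝ → ℂ)
    (hg : ∀ t : ℝ, g t = Complex.exp (Complex.I * ((a * t ^ 2 / (2 * b) : ℝ) : ℂ)) * f t) :
    ∀ x y : ℝ, 0 < y →
      2 * ∫ ω in Set.Ioi (0 : ℝ),
          lctKernelInv a b c d ((x : ℂ) + (y : ℂ) * Complex.I) ω * lct a b c d f ω =
        Complex.exp (-(Complex.I) * (a : ℂ) * ((x : ℂ) + (y : ℂ) * Complex.I) ^ 2 /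
            (2 * (b : ℂ))) *
          ((∫ t : ℝ, ((y / (Real.pi * ((x - t) ^ 2 + y ^ 2)) : ℝ) : ℂ) * g t) +
            Complex.I *
              ∫ t : ℝ, (((x - t) / (Real.pi * ((x - t) ^ 2 + y ^ 2)) : ℝ) : ℂ) * g t) := by
  intro x y hy
  set z : ℂ := x + y * I
  have hgi : Integrable g := (hf1.cexp_I_mul_ofReal_mul (by fun_prop)).congr
    (Eventually.of_forall fun t => (hg t).symm)
  have hz_sub (t : ℝ) : z - t = ((x - t : ℝ) : ℂ) + y * I := by push_cast; ring
  calc 2 * ∫ ω in Set.Ioi (0 : ℝ), lctKernelInv a b c d z ω * lct a b c d f ω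
      = 2 * ((2 * Real.pi * b : ℂ)⁻¹ * cexp (-I * a * z ^ 2 / (2 * b)) *
          ∫ ω in Set.Ioi (0 : ℝ), ∫ t : ℝ, cexp (I * (z - t) / b * ω) * g t) := by
        simp_rw [lctKernelInv_mul_lct hb, ← hg, integral_const_mul]
    _ = cexp (-I * a * z ^ 2 / (2 * b)) * ∫ t : ℝ, I / (Real.pi * (z - t)) * g t := by
        rw [integral_Ioi_integral_cexp_I_mul_sub_div_mul hb (by simpa [z] using hy) hgi,
          ← integral_const_mul, ← integral_const_mul, ← integral_const_mul]
        congr 1 with t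
        have hb' : (b : ℂ) ≠ 0 := ofReal_ne_zero.2 hb.ne'
        field_simp
    _ = cexp (-I * a * z ^ 2 / (2 * b)) * ∫ t : ℝ,
          (halfPlanePoissonKernel y (x - t) + I * halfPlaneConjPoissonKernel y (x - t)) * g t := by
        simp_rw [hz_sub, I_div_pi_mul_eq_halfPlanePoissonKernel_add hy.ne']
    _ = _ := by
        simp_rw [add_mul, mul_assoc I]
        rw [integral_add (hgi.halfPlanePoissonKernel_mul hy x)
          ((hgi.halfPlaneConjPoissonKernel_mul hy x).const_mul I), integral_const_mul]
        rfl

/-- Poisson-integral representation of the generalized analytic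
signal on the upper half-plane. -/
theorem generalized_analytic_signal_poisson_repr
    (a b c d : ℝ) (hb : 0 < b) (habcd : a * d - b * c = 1)
    (f : ℝ → ℂ) (hf1 : Integrable f) (hf2 : MemLp f 2)
    (hF : Integrable (lct a b c d f))
    (g : ℝ → ℂ)
    (hg : ∀ t : ℝ, g t = Complex.exp (Complex.I * ((a * t ^ 2 / (2 * b) : ℝ) : ℂ)) * f t) :
    ∀ x y : ℝ, 0 < y →
      2 * ∫ ω in Set.Ioi (0 : ℝ),
          lctKernelInv a b c d ((x : ℂ) + (y : ℂ) * Complex.I) ω * lct a b c d f ω =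
        Complex.exp (-(Complex.I) * (a : ℂ) * ((x : ℂ) + (y : ℂ) * Complex.I) ^ 2 /
            (2 * (b : ℂ))) *
          ((∫ t : ℝ, ((y / (Real.pi * ((x - t) ^ 2 + y ^ 2)) : ℝ) : ℂ) * g t) +
            Complex.I *
              ∫ t : ℝ, (((x - t) / (Real.pi * ((x - t) ^ 2 + y ^ 2)) : ℝ) : ℂ) * g t) :=
  generalized_analytic_signal_poisson_repr_general a b c d hb f hf1 g hg
end
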